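/- arXiv:quant-ph/0309092 — 5 statements merged into one kernel-verified Lean document; each statement's English description precedes it below -/
import Mathlib

section
/- Let A be a ℚ-vector space, μ : A → ℂ a map, and n ≥ 2. Then I^μ_{n+1} vanishes identically if and only if the symmetric functional I^μ_n is additive in each argument (hence I^μ_n ∈ Σ_n(A)). -/
/-!
Writing `Δ_h μ (x) = μ (x + h) - μ x`, the interference functional is an iterated forward
difference: `I^μ_k(a) = Δ_{a₁} ⋯ Δ_{a_k} μ (0) - (-1)^k μ(0)`. Peeling off one difference gives
`I^μ_{k+1}(t, a) = Δ_{a₁} ⋯ Δ_{a_k} μ (t) - I^μ_k(a)`, and peeling off two gives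
`I^μ_{k+2}(y, x, a) = I^μ_{k+1}(x + y, a) - I^μ_{k+1}(x, a) - I^μ_{k+1}(y, a)`.
As `I^μ_{k+1}` is symmetric, additivity in every argument is additivity in the first one,
which by this identity is the vanishing of `I^μ_{k+2}`.
-/

open Finset

/-- The `k`-th interference functional of `μ`:
`I^μ_k(a₁,…,a_k) = Σ_S (−1)^{k−|S|} μ(Σ_{i∈S} a_i)`, where `S` ranges over
non-empty subsets of `{1,…,k}`. -/
noncomputable def interference {A : Type*} [AddCommGroup A] (μ : A → ℂ) {k : ℕ}
    (a : Fin k → A) : ℂ :=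
  ∑ S ∈ (Finset.univ : Finset (Fin k)).powerset.filter (fun S => S.Nonempty),
    (-1 : ℂ) ^ (k - S.card) * μ (∑ i ∈ S, a i)

/-- `μ ∈ 𝓜_n(A)`: the order-`n` sum rule
`μ(a₁+⋯+a_{n+1}) = Σ_S (−1)^{n−|S|} μ(Σ_{i∈S} a_i)`, with `S` running over the
subsets of `{1,…,n+1}` satisfying `1 ≤ |S| ≤ n`. -/
def MemMeasureSpace {A : Type*} [AddCommGroup A] (n : ℕ) (μ : A → ℂ) : Prop :=
  ∀ a : Fin (n + 1) → A,
    μ (∑ i, a i) =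
      ∑ S ∈ (Finset.univ : Finset (Fin (n + 1))).powerset.filter
          (fun S => S.Nonempty ∧ S.card ≤ n),
        (-1 : ℂ) ^ (n - S.card) * μ (∑ i ∈ S, a i)

/-- Total symmetry of a functional of `n` arguments. -/
def IsTotallySymmetric {A : Type*} {n : ℕ} (Φ : (Fin n → A) → ℂ) : Prop :=
  ∀ (σ : Equiv.Perm (Fin n)) (a : Fin n → A), Φ (a ∘ σ) = Φ a

/-- Additivity in each argument of a functional of `n` arguments. -/
def IsMultiadditive {A : Type*} [AddCommGroup A] {n : ℕ} (Φ : (Fin n → A) → ℂ) : Prop :=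
  ∀ (i : Fin n) (a : Fin n → A) (x y : A),
    Φ (Function.update a i (x + y)) =
      Φ (Function.update a i x) + Φ (Function.update a i y)

/-- The polarization map
`Π_n(μ)(a₁,…,a_n) = (1/(2ⁿ n!)) Σ_{z∈{1,−1}ⁿ} z₁⋯z_n · μ(z₁a₁+⋯+z_n a_n)`,
the sum running over all sign choices `z ∈ {1,−1}ⁿ`. -/
noncomputable def polarization {A : Type*} [AddCommGroup A] (μ : A → ℂ) {n : ℕ}
    (a : Fin n → A) : ℂ :=
  (1 / (2 ^ n * n.factorial : ℂ)) *
    ∑ z : Fin n → Bool,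
      (∏ i, if z i then (1 : ℂ) else -1) * μ (∑ i, if z i then a i else -a i)

section MixedFwdDiff

variable {ι κ M R : Type*} [AddCommMonoid M] [CommRing R]

noncomputable def mixedFwdDiff (a : ι → M) (s : Finset ι) (f : M → R) (x : M) : R :=
  ∑ T ∈ s.powerset, (-1 : R) ^ (#s - #T) * f (x + ∑ i ∈ T, a i)

@[simp]
lemma mixedFwdDiff_empty (a : ι → M) (f : M → R) : mixedFwdDiff a ∅ f = f := by
  ext x
  simp [mixedFwdDiff]

lemma mixedFwdDiff_insert [DecidableEq ι] (a : ι → M) {s : Finset ι} {i : ι} (hi : i ∉ s)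
    (f : M → R) : mixedFwdDiff a (insert i s) f = fwdDiff (a i) (mixedFwdDiff a s f) := by
  ext x
  rw [mixedFwdDiff, sum_powerset_insert hi, card_insert_of_notMem hi, fwdDiff, sub_eq_add_neg,
    add_comm (mixedFwdDiff _ _ _ _), mixedFwdDiff, mixedFwdDiff, ← sum_neg_distrib]
  congr 1 <;> refine sum_congr rfl fun T hT => ?_
  · rw [Nat.sub_add_comm (card_le_card (mem_powerset.1 hT)), pow_succ]
    ring
  · have hiT : i ∉ T := fun h => hi (mem_powerset.1 hT h)
    rw [card_insert_of_notMem hiT, sum_insert hiT, Nat.add_sub_add_right, add_assoc]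

lemma mixedFwdDiff_map (e : ι ↪ κ) (a : κ → M) (s : Finset ι) (f : M → R) :
    mixedFwdDiff a (s.map e) f = mixedFwdDiff (a ∘ e) s f := by
  classical
  induction s using Finset.induction_on with
  | empty => simp
  | insert i s hi ih =>
    rw [map_insert, mixedFwdDiff_insert _ (by simpa using hi), mixedFwdDiff_insert _ hi, ih]
    rfl

lemma mixedFwdDiff_univ_cons {k : ℕ} (t : M) (a : Fin k → M) (f : M → R) :
    mixedFwdDiff (Fin.cons t a : Fin (k + 1) → M) univ f = fwdDiff t (mixedFwdDiff a univ f) := by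
  rw [Fin.univ_succ, cons_eq_insert, mixedFwdDiff_insert _ (by simp), mixedFwdDiff_map]
  rfl

end MixedFwdDiff

section Interference

variable {A : Type*} [AddCommGroup A] (μ : A → ℂ)

lemma interference_eq_mixedFwdDiff {k : ℕ} (a : Fin k → A) :
    interference μ a = mixedFwdDiff a univ μ 0 - (-1) ^ k * μ 0 := by
  rw [mixedFwdDiff, ← sum_filter_add_sum_filter_not _ Finset.Nonempty, interference]
  simp [not_nonempty_iff_eq_empty, filter_eq']

lemma interference_comp_perm {k : ℕ} (σ : Equiv.Perm (Fin k)) (a : Fin k → A) :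
    interference μ (a ∘ σ) = interference μ a := by
  rw [interference_eq_mixedFwdDiff, interference_eq_mixedFwdDiff]
  conv_rhs => rw [← map_univ_equiv σ, mixedFwdDiff_map]
  rfl

lemma interference_isTotallySymmetric (k : ℕ) :
    IsTotallySymmetric (fun a : Fin k → A => interference μ a) :=
  interference_comp_perm μ

lemma interference_cons {k : ℕ} (t : A) (a : Fin k → A) :
    interference μ (Fin.cons t a) = mixedFwdDiff a univ μ t - interference μ a := by
  rw [interference_eq_mixedFwdDiff, interference_eq_mixedFwdDiff, mixedFwdDiff_univ_cons,
    fwdDiff, zero_add, pow_succ]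
  ring

lemma interference_cons_cons {k : ℕ} (x y : A) (a : Fin k → A) :
    interference μ (Fin.cons y (Fin.cons x a)) =
      interference μ (Fin.cons (x + y) a) - interference μ (Fin.cons x a)
        - interference μ (Fin.cons y a) := by
  simp only [interference_cons, mixedFwdDiff_univ_cons, fwdDiff, add_comm y x]
  ring

end Interference

lemma IsTotallySymmetric.isMultiadditive_iff {A : Type*} [AddCommGroup A] {k : ℕ}
    {Φ : (Fin (k + 1) → A) → ℂ} (hΦ : IsTotallySymmetric Φ) :
    IsMultiadditive Φ ↔ ∀ (a : Fin k → A) (x y : A),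
      Φ (Fin.cons (x + y) a) = Φ (Fin.cons x a) + Φ (Fin.cons y a) := by
  refine ⟨fun h a x y => by simpa only [Fin.update_cons_zero] using h 0 (Fin.cons x a) x y,
    fun h i b x y => ?_⟩
  set c := b ∘ Equiv.swap 0 i
  have hupdate : ∀ z, Φ (Function.update b i z) = Φ (Fin.cons z (Fin.tail c)) := fun z => by
    rw [← hΦ (Equiv.swap 0 i), Function.update_comp_equiv, Equiv.symm_swap,
      Equiv.swap_apply_right, ← Fin.update_cons_zero (x := c 0), Fin.cons_self_tail]
  simp only [hupdate, h]

theorem interference_succ_eq_zero_iff_multiadditive_general {A : Type*} [AddCommGroup A]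
    (μ : A → ℂ) (n : ℕ) (hn : 2 ≤ n) :
    (∀ a : Fin (n + 1) → A, interference μ a = 0) ↔
      IsMultiadditive (fun a : Fin n → A => interference μ a) := by
  obtain ⟨k, rfl⟩ : ∃ k, n = k + 1 := ⟨n - 1, by omega⟩
  rw [(interference_isTotallySymmetric μ (k + 1)).isMultiadditive_iff]
  refine ⟨fun h a x y => ?_, fun h b => ?_⟩
  · linear_combination h (Fin.cons y (Fin.cons x a)) - interference_cons_cons μ x y a
  · rw [← Fin.cons_self_tail b, ← Fin.cons_self_tail (Fin.tail b), interference_cons_cons, h]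
    ring

/-- For `n ≥ 2`, `I^μ_{n+1}` vanishes identically iff the (automatically symmetric)
functional `I^μ_n` is additive in each argument, i.e. `I^μ_n ∈ Σ_n(A)`. -/
theorem interference_succ_eq_zero_iff_multiadditive {A : Type*} [AddCommGroup A] [Module ℚ A]
    (μ : A → ℂ) (n : ℕ) (hn : 2 ≤ n) :
    (∀ a : Fin (n + 1) → A, interference μ a = 0) ↔
      IsMultiadditive (fun a : Fin n → A => interference μ a) :=
  interference_succ_eq_zero_iff_multiadditive_general μ n hn
end

section
/- Let A be a ℚ-vector space and n ≥ 2. Then 𝓜_{n−1}(A) ⊆ 𝓜_n(A): every μ : A → ℂ satisfying the order-(n−1) sum rule also satisfies the order-n sum rule. -/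
open Finset

noncomputable def Efn {A : Type*} [AddCommGroup A] (μ : A → ℂ) {ι : Type*} [DecidableEq ι]
    (s : Finset ι) (a : ι → A) (x : A) : ℂ :=
  ∑ T ∈ s.powerset, (-1 : ℂ) ^ T.card * μ (x + ∑ i ∈ T, a i)

theorem Efn_insert {A : Type*} [AddCommGroup A] (μ : A → ℂ) {ι : Type*} [DecidableEq ι]
    {s : Finset ι} {j : ι} (hj : j ∉ s) (a : ι → A) (x : A) :
    Efn μ (insert j s) a x = Efn μ s a x - Efn μ s a (x + a j) := by
  unfold Efn
  rw [Finset.sum_powerset_insert hj]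
  have h : ∀ T ∈ s.powerset, (-1 : ℂ) ^ (insert j T).card * μ (x + ∑ i ∈ insert j T, a i)
      = -((-1 : ℂ) ^ T.card * μ (x + a j + ∑ i ∈ T, a i)) := by
    intro T hT
    have hjT : j ∉ T := fun h => hj (Finset.mem_powerset.mp hT h)
    rw [Finset.card_insert_of_notMem hjT, Finset.sum_insert hjT, pow_succ, add_assoc]
    ring
  rw [Finset.sum_congr rfl h, Finset.sum_neg_distrib, ← sub_eq_add_neg]

theorem Efn_update {A : Type*} [AddCommGroup A] (μ : A → ℂ) {ι : Type*} [DecidableEq ι]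
    {s : Finset ι} {k : ι} (hk : k ∉ s) (a : ι → A) (w : A) (x : A) :
    Efn μ s (Function.update a k w) x = Efn μ s a x := by
  unfold Efn
  refine Finset.sum_congr rfl fun T hT => ?_
  have hT' := Finset.mem_powerset.mp hT
  have : ∑ i ∈ T, Function.update a k w i = ∑ i ∈ T, a i :=
    Finset.sum_congr rfl fun i hi =>
      Function.update_of_ne (show i ≠ k from fun h => hk (h ▸ hT' hi)) w a
  rw [this]

theorem Efn_map {A : Type*} [AddCommGroup A] (μ : A → ℂ) {ι κ : Type*} [DecidableEq ι]
    [DecidableEq κ] (f : ι ↪ κ) (s : Finset ι) (b : κ → A) (x : A) :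
    Efn μ (s.map f) b x = Efn μ s (b ∘ f) x := by
  unfold Efn
  have hpm : (s.map f).powerset = s.powerset.map (Finset.mapEmbedding f).toEmbedding := by
    ext T
    have hco : ∀ U : Finset ι, (Finset.mapEmbedding f).toEmbedding U = U.map f := fun U =>
      Finset.mapEmbedding_apply
    simp only [Finset.mem_powerset, Finset.mem_map, hco, subset_map_iff, eq_comm]
  have hco : ∀ U : Finset ι, (Finset.mapEmbedding f).toEmbedding U = U.map f := fun U =>
    Finset.mapEmbedding_apply
  rw [hpm, Finset.sum_map]
  refine Finset.sum_congr rfl fun T _ => ?_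
  rw [hco, Finset.card_map, Finset.sum_map]
  rfl

theorem Efn_key {A : Type*} [AddCommGroup A] (μ : A → ℂ) {ι : Type*} [DecidableEq ι]
    {s : Finset ι} {j k : ι} (hk : k ∉ s) (hj : j ∉ insert k s) (b : ι → A)
    (H : ∀ w : A, Efn μ (insert k s) (Function.update b k w) 0 = μ 0) :
    Efn μ (insert j (insert k s)) b 0 = μ 0 := by
  have hG : ∀ w : A, Efn μ s b (0 + w) = Efn μ s b 0 - μ 0 := by
    intro w
    have h1 := H w
    rw [Efn_insert μ hk, Efn_update μ hk, Efn_update μ hk, Function.update_self] at h1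
    linear_combination -h1
  rw [Efn_insert μ hj, Efn_insert μ hk, Efn_insert μ hk]
  have e3 : (0 : A) + b j + b k = 0 + (b j + b k) := by abel
  rw [e3, hG (b j), hG (b k), hG (b j + b k)]
  ring

theorem sum_powerset_decomp (p : ℕ) (f : Finset (Fin (p + 1)) → ℂ) :
    ∑ T ∈ (Finset.univ : Finset (Fin (p + 1))).powerset, f T =
      f ∅ + f Finset.univ +
        ∑ T ∈ (Finset.univ : Finset (Fin (p + 1))).powerset.filter
            (fun S => S.Nonempty ∧ S.card ≤ p), f T := by
  classical
  have hsplit := Finset.sum_filter_add_sum_filter_not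
    (Finset.univ : Finset (Fin (p + 1))).powerset (fun S => S.Nonempty ∧ S.card ≤ p) f
  have hrest : (Finset.univ : Finset (Fin (p + 1))).powerset.filter
      (fun S => ¬(S.Nonempty ∧ S.card ≤ p)) = {∅, Finset.univ} := by
    ext T
    simp only [Finset.mem_filter, Finset.mem_powerset, Finset.subset_univ, true_and,
      Finset.mem_insert, Finset.mem_singleton]
    constructor
    · intro h
      rcases Finset.eq_empty_or_nonempty T with h0 | h0
      · exact Or.inl h0
      · right
        have hle : T.card ≤ p + 1 := by
          have := Finset.card_le_univ T
          simpa using this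
        have hgt : ¬ T.card ≤ p := fun hc => h ⟨h0, hc⟩
        have hcard : T.card = Fintype.card (Fin (p + 1)) := by
          rw [Fintype.card_fin]; omega
        exact (Finset.card_eq_iff_eq_univ T).mp hcard
    · rintro (rfl | rfl)
      · rintro ⟨h1, -⟩
        exact h1.ne_empty rfl
      · rintro ⟨-, h2⟩
        rw [Finset.card_univ, Fintype.card_fin] at h2
        omega
  have hpair : ∑ T ∈ ({∅, Finset.univ} : Finset (Finset (Fin (p + 1)))), f T
      = f ∅ + f Finset.univ := by
    refine Finset.sum_pair ?_
    exact Ne.symm (Finset.univ_nonempty.ne_empty)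
  rw [← hsplit, hrest, hpair]
  ring

theorem neg_one_pow_sub' {k c : ℕ} (h : c ≤ k) : (-1 : ℂ) ^ (k - c) = (-1) ^ k * (-1) ^ c := by
  have h2 : (-1 : ℂ) ^ c * (-1) ^ c = 1 := by rw [← mul_pow]; norm_num
  have h1 : (-1 : ℂ) ^ (k - c) * (-1) ^ c = (-1) ^ k := by
    rw [← pow_add, Nat.sub_add_cancel h]
  calc (-1 : ℂ) ^ (k - c) = (-1) ^ (k - c) * ((-1) ^ c * (-1) ^ c) := by rw [h2, mul_one]
  _ = (-1) ^ k * (-1) ^ c := by rw [← mul_assoc, h1]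

theorem mem_iff_Efn {A : Type*} [AddCommGroup A] (μ : A → ℂ) (k : ℕ) :
    MemMeasureSpace k μ ↔ ∀ a : Fin (k + 1) → A, Efn μ Finset.univ a 0 = μ 0 := by
  have hE : ∀ a : Fin (k + 1) → A, Efn μ Finset.univ a 0 =
      μ 0 + (-1 : ℂ) ^ k * (-1) * μ (∑ i, a i) +
      ∑ S ∈ (Finset.univ : Finset (Fin (k + 1))).powerset.filter
          (fun S => S.Nonempty ∧ S.card ≤ k),
        (-1 : ℂ) ^ S.card * μ (∑ i ∈ S, a i) := by
    intro a
    unfold Efn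
    rw [sum_powerset_decomp]
    simp only [Finset.card_empty, pow_zero, one_mul, Finset.sum_empty, add_zero, zero_add,
      Finset.card_univ, Fintype.card_fin, pow_succ]
  have hR : ∀ a : Fin (k + 1) → A,
      ∑ S ∈ (Finset.univ : Finset (Fin (k + 1))).powerset.filter
          (fun S => S.Nonempty ∧ S.card ≤ k),
        (-1 : ℂ) ^ (k - S.card) * μ (∑ i ∈ S, a i)
      = (-1 : ℂ) ^ k * ∑ S ∈ (Finset.univ : Finset (Fin (k + 1))).powerset.filter
          (fun S => S.Nonempty ∧ S.card ≤ k),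
        (-1 : ℂ) ^ S.card * μ (∑ i ∈ S, a i) := by
    intro a
    rw [Finset.mul_sum]
    refine Finset.sum_congr rfl fun S hS => ?_
    have hc : S.card ≤ k := (Finset.mem_filter.mp hS).2.2
    rw [neg_one_pow_sub' hc, mul_assoc]
  have hsq : (-1 : ℂ) ^ k * (-1 : ℂ) ^ k = 1 := by rw [← mul_pow]; norm_num
  constructor
  · intro h a
    have h1 := h a
    rw [hR a] at h1
    rw [hE a]
    set M := ∑ S ∈ (Finset.univ : Finset (Fin (k + 1))).powerset.filter
        (fun S => S.Nonempty ∧ S.card ≤ k),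
      (-1 : ℂ) ^ S.card * μ (∑ i ∈ S, a i) with hM
    linear_combination (-((-1 : ℂ) ^ k)) * h1 - M * hsq
  · intro h a
    have h1 := hE a
    rw [h a] at h1
    rw [hR a]
    set M := ∑ S ∈ (Finset.univ : Finset (Fin (k + 1))).powerset.filter
        (fun S => S.Nonempty ∧ S.card ≤ k),
      (-1 : ℂ) ^ S.card * μ (∑ i ∈ S, a i) with hM
    linear_combination ((-1 : ℂ) ^ k) * h1 - μ (∑ i, a i) * hsq

/-- For `n ≥ 2`, `𝓜_{n−1}(A) ⊆ 𝓜_n(A)`: a map satisfying the order-`(n−1)` sum rule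
also satisfies the order-`n` sum rule. -/
theorem memMeasureSpace_mono {A : Type*} [AddCommGroup A] [Module ℚ A]
    (μ : A → ℂ) (n : ℕ) (hn : 2 ≤ n) (hμ : MemMeasureSpace (n - 1) μ) :
    MemMeasureSpace n μ := by
  obtain ⟨m, rfl⟩ : ∃ m, n = m + 2 := ⟨n - 2, by omega⟩
  have hμ1 : MemMeasureSpace (m + 1) μ := hμ
  have hμ' : ∀ a : Fin (m + 2) → A, Efn μ Finset.univ a 0 = μ 0 :=
    (mem_iff_Efn μ (m + 1)).mp hμ1
  rw [mem_iff_Efn μ (m + 2)]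
  intro b
  set j : Fin (m + 3) := Fin.last (m + 2) with hj_def
  set u : Finset (Fin (m + 3)) := Finset.univ.map Fin.castSuccEmb with hu_def
  set k : Fin (m + 3) := (Fin.last (m + 1)).castSucc with hk_def
  have hk_mem : k ∈ u := by
    rw [hu_def]
    exact Finset.mem_map_of_mem _ (Finset.mem_univ (Fin.last (m + 1)))
  set s : Finset (Fin (m + 3)) := u.erase k with hs_def
  have hks : k ∉ s := Finset.notMem_erase k u
  have hins : insert k s = u := Finset.insert_erase hk_mem
  have hju : j ∉ u := by
    rw [hu_def]
    simp only [Finset.mem_map, Finset.mem_univ, true_and, not_exists]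
    intro i
    exact (Fin.castSucc_lt_last i).ne
  have hjk : j ∉ insert k s := by rw [hins]; exact hju
  have huniv : insert j u = Finset.univ := by
    rw [Fin.univ_castSuccEmb (m + 2), Finset.cons_eq_insert]
  have H : ∀ w : A, Efn μ (insert k s) (Function.update b k w) 0 = μ 0 := by
    intro w
    rw [hins, hu_def, Efn_map]
    exact hμ' _
  have hfin := Efn_key μ hks hjk b H
  rw [hins, huniv] at hfin
  exact hfin
end

section
/- Let A be a ℚ-vector space, n ≥ 2, and μ ∈ 𝓜_n(A). Define Φ(a₁, …, a_n) = (1/(2ⁿ n!)) Σ_z (−1)^z μ(z₁a₁ + ⋯ + z_n a_n), where z = (z₁, …, z_n) ranges over {1, −1}ⁿ and (−1)^z = z₁⋯z_n. Then I^μ_n(a₁, …, a_n) = n! · Φ(a₁, …, a_n) for all a₁, …, a_n ∈ A. -/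
open Finset

section Comb
variable {ι : Type*} [DecidableEq ι]

lemma sum_powerset_split [Fintype ι] (j : ι) (f : Finset ι → ℂ) :
    ∑ S ∈ (univ : Finset ι).powerset, f S =
      ∑ S ∈ ((univ : Finset ι).erase j).powerset, (f S + f (insert j S)) := by
  conv_lhs => rw [← Finset.insert_erase (Finset.mem_univ j)]
  rw [Finset.sum_powerset_insert (Finset.notMem_erase j _), Finset.sum_add_distrib]

lemma sum_powerset_neg_one_pow_card' (s : Finset ι) :
    ∑ V ∈ s.powerset, (-1 : ℂ) ^ V.card = if s = ∅ then 1 else 0 := by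
  have h : ((∑ m ∈ s.powerset, (-1 : ℤ) ^ m.card : ℤ) : ℂ)
      = ((if s = ∅ then 1 else 0 : ℤ) : ℂ) := by
    exact_mod_cast congrArg (fun z : ℤ => (z : ℂ)) Finset.sum_powerset_neg_one_pow_card
  push_cast at h
  simpa [apply_ite (fun z : ℤ => (z : ℂ))] using h

lemma sum_filter_superset [Fintype ι] (U : Finset ι) :
    ∑ T ∈ (univ : Finset ι).powerset.filter (fun T => U ⊆ T), (-1 : ℂ) ^ (T.card - U.card)
      = if U = univ then 1 else 0 := by
  rw [show (if U = univ then (1:ℂ) else 0) = if Uᶜ = ∅ then 1 else 0 by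
      simp [Finset.compl_eq_empty_iff]]
  rw [← sum_powerset_neg_one_pow_card' (Uᶜ)]
  refine Finset.sum_nbij' (fun T => T \ U) (fun V => V ∪ U) ?_ ?_ ?_ ?_ ?_
  · intro T hT
    simp only [Finset.mem_filter, Finset.mem_powerset] at hT
    simp only [Finset.mem_powerset]
    intro x hx
    simp only [Finset.mem_sdiff] at hx
    simp [Finset.mem_compl, hx.2]
  · intro V hV
    simp only [Finset.mem_powerset] at hV
    simp only [Finset.mem_filter, Finset.mem_powerset]
    exact ⟨Finset.subset_univ _, Finset.subset_union_right⟩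
  · intro T hT
    simp only [Finset.mem_filter, Finset.mem_powerset] at hT
    exact Finset.sdiff_union_of_subset hT.2
  · intro V hV
    simp only [Finset.mem_powerset] at hV
    apply Finset.union_sdiff_cancel_right
    rw [Finset.disjoint_left]
    intro x hxV hxU
    exact (Finset.mem_compl.1 (hV hxV)) hxU
  · intro T hT
    simp only [Finset.mem_filter, Finset.mem_powerset] at hT
    rw [Finset.card_sdiff_of_subset hT.2]
end Comb

section Comb2
variable {ι : Type*} [DecidableEq ι] [Fintype ι]

lemma mobius_inv (f : Finset ι → ℂ) :
    ∑ T ∈ (univ : Finset ι).powerset, ∑ U ∈ T.powerset,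
        (-1 : ℂ) ^ (T.card - U.card) * f U = f univ := by
  have h1 : ∀ T ∈ (univ : Finset ι).powerset,
      ∑ U ∈ T.powerset, (-1 : ℂ) ^ (T.card - U.card) * f U
        = ∑ U ∈ (univ : Finset ι).powerset,
            if U ⊆ T then (-1 : ℂ) ^ (T.card - U.card) * f U else 0 := by
    intro T _
    rw [← Finset.sum_filter]
    apply Finset.sum_congr _ (fun _ _ => rfl)
    ext U
    simp [Finset.mem_powerset]
  rw [Finset.sum_congr rfl h1, Finset.sum_comm]
  have h2 : ∀ U ∈ (univ : Finset ι).powerset,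
      ∑ T ∈ (univ : Finset ι).powerset,
          (if U ⊆ T then (-1 : ℂ) ^ (T.card - U.card) * f U else 0)
        = (if U = univ then 1 else 0) * f U := by
    intro U _
    rw [← sum_filter_superset U, Finset.sum_mul, ← Finset.sum_filter]
  rw [Finset.sum_congr rfl h2]
  rw [Finset.sum_congr rfl (fun U _ => by rw [ite_mul, one_mul, zero_mul] :
    ∀ U ∈ (univ : Finset ι).powerset, (if U = univ then (1:ℂ) else 0) * f U
      = if U = univ then f U else 0)]
  rw [Finset.sum_ite_eq' (univ : Finset ι).powerset univ f]
  simp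
end Comb2

lemma sum_powerset_map' {α β : Type*} [DecidableEq α] [DecidableEq β]
    (e : α ↪ β) (s : Finset α) (f : Finset β → ℂ) :
    ∑ T ∈ (s.map e).powerset, f T = ∑ T ∈ s.powerset, f (T.map e) := by
  refine (Finset.sum_nbij (fun T => T.map e) ?_ ?_ ?_ ?_).symm
  · intro T hT
    simp only [Finset.mem_powerset] at hT ⊢
    exact Finset.map_subset_map.2 hT
  · intro T₁ h₁ T₂ h₂ h
    exact Finset.map_injective e h
  · intro T hT
    simp only [Finset.coe_powerset, Set.mem_preimage, Set.mem_powerset_iff,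
      Finset.coe_subset, Set.mem_image] at hT ⊢
    obtain ⟨u, hu, rfl⟩ := Finset.subset_map_iff.1 hT
    exact ⟨u, by simpa using hu, rfl⟩
  · intro T hT
    rfl

section KK
variable {A : Type*} [AddCommGroup A]

noncomputable def Kfun (μ : A → ℂ) {m : ℕ} (b : Fin m → A) : ℂ :=
  ∑ S ∈ (univ : Finset (Fin m)).powerset, (-1 : ℂ) ^ (m - S.card) * μ (∑ i ∈ S, b i)

lemma Kzero_slot (μ : A → ℂ) {m : ℕ} (b : Fin m → A) (j : Fin m) :
    Kfun μ (Function.update b j 0) = 0 := by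
  rw [Kfun, sum_powerset_split j]
  apply Finset.sum_eq_zero
  intro T hT
  rw [Finset.mem_powerset] at hT
  have hj : j ∉ T := fun h => Finset.notMem_erase j _ (hT h)
  have hc : T.card + 1 ≤ m := by
    have hm : 0 < m := j.pos
    have := Finset.card_le_card hT
    rw [Finset.card_erase_of_mem (Finset.mem_univ j), Finset.card_univ,
      Fintype.card_fin] at this
    omega
  have hsum : ∑ i ∈ T, Function.update b j 0 i = ∑ i ∈ T, b i :=
    Finset.sum_congr rfl fun i hi =>
      Function.update_of_ne (fun h => hj (by rwa [← h])) _ _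
  have hsum2 : ∑ i ∈ insert j T, Function.update b j 0 i = ∑ i ∈ T, b i := by
    rw [Finset.sum_insert hj, hsum, Function.update_self, zero_add]
  rw [hsum, hsum2, Finset.card_insert_of_notMem hj]
  have : m - T.card = (m - (T.card + 1)) + 1 := by omega
  rw [this, pow_succ]
  ring
end KK

section KK2
variable {A : Type*} [AddCommGroup A]

lemma Krec (μ : A → ℂ) {m : ℕ} (b : Fin m → A) (j : Fin m) (x y : A) :
    Kfun μ (Fin.snoc (Function.update b j x) y : Fin (m + 1) → A) =
      Kfun μ (Function.update b j (x + y)) - Kfun μ (Function.update b j x)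
        - Kfun μ (Function.update b j y) := by
  have hlast : Fin.last m ∉ (univ : Finset (Fin m)).map Fin.castSuccEmb := by
    intro h
    simp only [Finset.mem_map] at h
    obtain ⟨i, -, hi⟩ := h
    exact (Fin.castSucc_lt_last i).ne (by simpa using hi)
  have huniv : (univ : Finset (Fin (m + 1)))
      = insert (Fin.last m) ((univ : Finset (Fin m)).map Fin.castSuccEmb) := by
    rw [Fin.univ_castSuccEmb, Finset.cons_eq_insert]
  have hstep1 : Kfun μ (Fin.snoc (Function.update b j x) y : Fin (m + 1) → A)
      = -Kfun μ (Function.update b j x) + ∑ T ∈ (univ : Finset (Fin m)).powerset,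
          (-1 : ℂ) ^ (m - T.card) * μ (y + ∑ i ∈ T, Function.update b j x i) := by
    rw [Kfun, huniv, Finset.sum_powerset_insert hlast, sum_powerset_map', sum_powerset_map']
    congr 1
    · rw [Kfun, ← Finset.sum_neg_distrib]
      apply Finset.sum_congr rfl
      intro T hT
      rw [Finset.mem_powerset] at hT
      have hc : T.card ≤ m := by simpa using Finset.card_le_card hT
      have hsum : ∑ i ∈ T.map Fin.castSuccEmb,
            (Fin.snoc (Function.update b j x) y : Fin (m + 1) → A) i
          = ∑ i ∈ T, Function.update b j x i := by
        rw [Finset.sum_map]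
        exact Finset.sum_congr rfl fun i _ => Fin.snoc_castSucc _ _ _
      rw [hsum, Finset.card_map, show m + 1 - T.card = (m - T.card) + 1 from by omega,
        pow_succ]
      ring
    · apply Finset.sum_congr rfl
      intro T hT
      have hlastT : Fin.last m ∉ T.map Fin.castSuccEmb := fun h =>
        hlast ((Finset.map_subset_map.2 (Finset.subset_univ T)) h)
      have hsum : ∑ i ∈ T.map Fin.castSuccEmb,
            (Fin.snoc (Function.update b j x) y : Fin (m + 1) → A) i
          = ∑ i ∈ T, Function.update b j x i := by
        rw [Finset.sum_map]
        exact Finset.sum_congr rfl fun i _ => Fin.snoc_castSucc _ _ _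
      rw [Finset.sum_insert hlastT, Fin.snoc_last, hsum,
        Finset.card_insert_of_notMem hlastT, Finset.card_map,
        show m + 1 - (T.card + 1) = m - T.card from by omega]
  have hG : ∑ T ∈ (univ : Finset (Fin m)).powerset,
        (-1 : ℂ) ^ (m - T.card) * μ (y + ∑ i ∈ T, Function.update b j x i)
      = Kfun μ (Function.update b j (x + y)) - Kfun μ (Function.update b j y) := by
    rw [Kfun, Kfun, sum_powerset_split j, sum_powerset_split j, sum_powerset_split j,
      ← Finset.sum_sub_distrib]
    apply Finset.sum_congr rfl
    intro T hT
    rw [Finset.mem_powerset] at hT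
    have hj : j ∉ T := fun h => Finset.notMem_erase j _ (hT h)
    have hc : T.card + 1 ≤ m := by
      have hm : 0 < m := j.pos
      have := Finset.card_le_card hT
      rw [Finset.card_erase_of_mem (Finset.mem_univ j), Finset.card_univ,
        Fintype.card_fin] at this
      omega
    have hb : ∀ v : A, ∑ i ∈ T, Function.update b j v i = ∑ i ∈ T, b i := fun v =>
      Finset.sum_congr rfl fun i hi => Function.update_of_ne (fun h => hj (by rwa [← h])) _ _
    have hbi : ∀ v : A, ∑ i ∈ insert j T, Function.update b j v i = v + ∑ i ∈ T, b i := by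
      intro v
      rw [Finset.sum_insert hj, hb v, Function.update_self]
    simp only [hb, hbi, Finset.card_insert_of_notMem hj]
    have harg : y + (x + ∑ i ∈ T, b i) = (x + y) + ∑ i ∈ T, b i := by abel
    rw [harg, show m - T.card = (m - (T.card + 1)) + 1 from by omega, pow_succ]
    ring
  rw [hstep1, hG]
  ring
end KK2

section KK3
variable {A : Type*} [AddCommGroup A] {n : ℕ} {μ : A → ℂ}

lemma filter_notP (n : ℕ) :
    ((univ : Finset (Fin (n + 1))).powerset.filter
        (fun S => ¬(S.Nonempty ∧ S.card ≤ n))) = {∅, univ} := by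
  ext S
  simp only [Finset.mem_filter, Finset.mem_powerset, Finset.subset_univ, true_and,
    Finset.mem_insert, Finset.mem_singleton]
  rw [not_and_or, Finset.not_nonempty_iff_eq_empty, not_le]
  constructor
  · rintro (rfl | h)
    · exact Or.inl rfl
    · refine Or.inr (Finset.eq_univ_of_card S ?_)
      have h2 : S.card ≤ n + 1 := by
        simpa using Finset.card_le_card (Finset.subset_univ S)
      simp only [Fintype.card_fin]
      omega
  · rintro (rfl | rfl)
    · exact Or.inl rfl
    · refine Or.inr ?_
      simp [Finset.card_univ]

lemma neg_one_pow_sub_eq (c : ℕ) (hc : c ≤ n) :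
    (-1 : ℂ) ^ (n - c) = (-1 : ℂ) ^ n * (-1 : ℂ) ^ c := by
  obtain ⟨d, rfl⟩ := Nat.exists_eq_add_of_le hc
  rw [Nat.add_sub_cancel_left, pow_add]
  have hsq : (-1 : ℂ) ^ c * (-1 : ℂ) ^ c = 1 := by
    rw [← pow_add]
    exact Even.neg_one_pow ⟨c, rfl⟩
  linear_combination (-(-1 : ℂ) ^ d) * hsq

lemma Kzero (hμ : MemMeasureSpace n μ) : μ 0 = 0 := by
  have hne : (∅ : Finset (Fin (n + 1))) ≠ univ := by
    intro h
    exact Finset.univ_nonempty.ne_empty h.symm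
  have h := hμ (fun _ => 0)
  simp only [Finset.sum_const_zero] at h
  rw [← Finset.sum_mul] at h
  have hsplit := Finset.sum_filter_add_sum_filter_not
    ((univ : Finset (Fin (n + 1))).powerset)
    (fun S => S.Nonempty ∧ S.card ≤ n) (fun S => (-1 : ℂ) ^ S.card)
  rw [filter_notP n, Finset.sum_pair hne, sum_powerset_neg_one_pow_card'] at hsplit
  rw [if_neg (by simpa using hne.symm)] at hsplit
  simp only [Finset.card_empty, pow_zero, Finset.card_univ, Fintype.card_fin] at hsplit
  have hcoef : ∑ S ∈ (univ : Finset (Fin (n + 1))).powerset.filter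
      (fun S => S.Nonempty ∧ S.card ≤ n), (-1 : ℂ) ^ (n - S.card)
      = (-1 : ℂ) ^ n * ∑ S ∈ (univ : Finset (Fin (n + 1))).powerset.filter
          (fun S => S.Nonempty ∧ S.card ≤ n), (-1 : ℂ) ^ S.card := by
    rw [Finset.mul_sum]
    apply Finset.sum_congr rfl
    intro S hS
    rw [Finset.mem_filter] at hS
    exact neg_one_pow_sub_eq S.card hS.2.2
  rw [hcoef] at h
  have hval : ∑ S ∈ (univ : Finset (Fin (n + 1))).powerset.filter
      (fun S => S.Nonempty ∧ S.card ≤ n), (-1 : ℂ) ^ S.card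
      = -(1 + (-1 : ℂ) ^ (n + 1)) := by
    linear_combination hsplit
  rw [hval] at h
  have hsq : (-1 : ℂ) ^ n * (-1 : ℂ) ^ n = 1 := by
    rw [← pow_add]
    exact Even.neg_one_pow ⟨n, rfl⟩
  have hkey : (-1 : ℂ) ^ n * μ 0 = 0 := by
    rw [pow_succ] at h
    linear_combination h + μ 0 * hsq
  have hne2 : (-1 : ℂ) ^ n ≠ 0 := pow_ne_zero n (by norm_num)
  exact (mul_eq_zero.1 hkey).resolve_left hne2

lemma Knull (hμ : MemMeasureSpace n μ) (h0 : μ 0 = 0) (c : Fin (n + 1) → A) :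
    Kfun μ c = 0 := by
  have hne : (∅ : Finset (Fin (n + 1))) ≠ univ := by
    intro h
    exact Finset.univ_nonempty.ne_empty h.symm
  have hsplit := Finset.sum_filter_add_sum_filter_not
    ((univ : Finset (Fin (n + 1))).powerset) (fun S => S.Nonempty ∧ S.card ≤ n)
    (fun S => (-1 : ℂ) ^ (n + 1 - S.card) * μ (∑ i ∈ S, c i))
  rw [Kfun, ← hsplit, filter_notP n, Finset.sum_pair hne]
  have hfilter : ∑ S ∈ (univ : Finset (Fin (n + 1))).powerset.filter
      (fun S => S.Nonempty ∧ S.card ≤ n),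
        (-1 : ℂ) ^ (n + 1 - S.card) * μ (∑ i ∈ S, c i) = -μ (∑ i, c i) := by
    rw [hμ c, ← Finset.sum_neg_distrib]
    apply Finset.sum_congr rfl
    intro S hS
    rw [Finset.mem_filter] at hS
    rw [show n + 1 - S.card = (n - S.card) + 1 from by omega, pow_succ]
    ring
  rw [hfilter]
  simp [h0, Finset.card_univ]

lemma Kadd (hμ : MemMeasureSpace n μ) (h0 : μ 0 = 0) (b : Fin n → A) (j : Fin n)
    (x y : A) : Kfun μ (Function.update b j (x + y))
      = Kfun μ (Function.update b j x) + Kfun μ (Function.update b j y) := by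
  have h := Krec μ b j x y
  rw [Knull hμ h0] at h
  linear_combination -h

lemma Kneg (hμ : MemMeasureSpace n μ) (h0 : μ 0 = 0) (b : Fin n → A) (j : Fin n) :
    Kfun μ (Function.update b j (-(b j))) = -Kfun μ b := by
  have h := Kadd hμ h0 b j (b j) (-(b j))
  rw [show b j + -(b j) = 0 from by abel, Function.update_eq_self, Kzero_slot] at h
  linear_combination -h

lemma Kflip (hμ : MemMeasureSpace n μ) (h0 : μ 0 = 0) (a : Fin n → A)
    (F : Finset (Fin n)) :
    Kfun μ (fun i => if i ∈ F then -a i else a i) = (-1 : ℂ) ^ F.card * Kfun μ a := by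
  induction F using Finset.induction_on with
  | empty =>
      have : (fun i => if i ∈ (∅ : Finset (Fin n)) then -a i else a i) = a := by
        funext i; simp
      rw [this]
      simp
  | @insert j F hj ih =>
      have hfun : (fun i => if i ∈ insert j F then -a i else a i)
          = Function.update (fun i => if i ∈ F then -a i else a i) j
              (-((fun i => if i ∈ F then -a i else a i) j)) := by
        funext i
        by_cases hij : i = j
        · subst hij
          simp [hj]
        · simp [Function.update_of_ne hij, Finset.mem_insert, hij]
      rw [hfun, Kneg hμ h0, ih, Finset.card_insert_of_notMem hj, pow_succ]
      ring
end KK3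

lemma interference_eq_Kfun {A : Type*} [AddCommGroup A] (μ : A → ℂ) {n : ℕ}
    (h0 : μ 0 = 0) (a : Fin n → A) : interference μ a = Kfun μ a := by
  rw [Kfun, ← Finset.sum_filter_add_sum_filter_not ((univ : Finset (Fin n)).powerset)
    (fun S => S.Nonempty)]
  have hsingle : (univ : Finset (Fin n)).powerset.filter (fun S => ¬S.Nonempty) = {∅} := by
    ext S
    simp [Finset.not_nonempty_iff_eq_empty]
  rw [hsingle, Finset.sum_singleton]
  simp [interference, h0]

/-- For `n ≥ 2` and `μ ∈ 𝓜_n(A)`, the interference functional equals `n!` times the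
polarization: `I^μ_n(a₁,…,a_n) = n! · Φ(a₁,…,a_n)`. -/
theorem interference_eq_factorial_mul_polarization {A : Type*} [AddCommGroup A] [Module ℚ A]
    (μ : A → ℂ) (n : ℕ) (hn : 2 ≤ n) (hμ : MemMeasureSpace n μ) :
    ∀ a : Fin n → A, interference μ a = (n.factorial : ℂ) * polarization μ a := by
  intro a
  have h0 : μ 0 = 0 := Kzero hμ
  have key : ∑ z : Fin n → Bool,
      (∏ i, if z i then (1 : ℂ) else -1) * μ (∑ i, if z i then a i else -a i)
      = (2 : ℂ) ^ n * Kfun μ a := by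
    have hmob : ∀ z : Fin n → Bool,
        μ (∑ i, if z i then a i else -a i)
          = ∑ T ∈ (univ : Finset (Fin n)).powerset, ∑ U ∈ T.powerset,
              (-1 : ℂ) ^ (T.card - U.card) * μ (∑ i ∈ U, if z i then a i else -a i) :=
      fun z => (mobius_inv (fun U => μ (∑ i ∈ U, if z i then a i else -a i))).symm
    have hzero : ∀ T ∈ (univ : Finset (Fin n)).powerset, T ≠ univ →
        ∑ z : Fin n → Bool, (∏ i, if z i then (1 : ℂ) else -1) *
          (∑ U ∈ T.powerset, (-1 : ℂ) ^ (T.card - U.card) *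
            μ (∑ i ∈ U, if z i then a i else -a i)) = 0 := by
      intro T _ hT
      obtain ⟨j, hj⟩ : ∃ j, j ∉ T := by
        by_contra hcon
        push_neg at hcon
        exact hT (Finset.eq_univ_iff_forall.2 hcon)
      set F : (Fin n → Bool) → ℂ := fun z => (∏ i, if z i then (1 : ℂ) else -1) *
          (∑ U ∈ T.powerset, (-1 : ℂ) ^ (T.card - U.card) *
            μ (∑ i ∈ U, if z i then a i else -a i)) with hF
      have hinv : Function.Involutive
          (fun z : Fin n → Bool => Function.update z j (!z j)) := by
        intro z
        funext i
        by_cases hij : i = j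
        · subst hij; simp
        · simp [Function.update_of_ne hij]
      have hneg : ∀ z, F (Function.update z j (!z j)) = -F z := by
        intro z
        rw [hF]
        simp only
        have hprod : (∏ i, if (Function.update z j (!z j)) i then (1 : ℂ) else -1)
            = -∏ i, if z i then (1 : ℂ) else -1 := by
          have hfeq : (fun i => if (Function.update z j (!z j)) i then (1 : ℂ) else -1)
              = Function.update (fun i => if z i then (1 : ℂ) else -1) j
                  (if !z j then (1 : ℂ) else -1) := by
            funext i
            by_cases hij : i = j
            · subst hij; simp
            · simp [Function.update_of_ne hij]
          rw [hfeq, Finset.prod_update_of_mem (Finset.mem_univ j),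
            Finset.prod_eq_mul_prod_sdiff_singleton_of_mem (Finset.mem_univ j)
              (fun i => if z i then (1 : ℂ) else -1)]
          cases hzj : z j <;> simp [hzj]
        have hsums : (∑ U ∈ T.powerset, (-1 : ℂ) ^ (T.card - U.card) *
              μ (∑ i ∈ U, if (Function.update z j (!z j)) i then a i else -a i))
            = ∑ U ∈ T.powerset, (-1 : ℂ) ^ (T.card - U.card) *
              μ (∑ i ∈ U, if z i then a i else -a i) := by
          apply Finset.sum_congr rfl
          intro U hU
          rw [Finset.mem_powerset] at hU
          congr 2
          apply Finset.sum_congr rfl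
          intro i hi
          have hij : i ≠ j := fun h => hj (hU (by rwa [← h]))
          rw [Function.update_of_ne hij]
        rw [hprod, hsums]
        ring
      have hS : ∑ z : Fin n → Bool, F z = -∑ z : Fin n → Bool, F z := by
        conv_lhs => rw [← Equiv.sum_comp (Function.Involutive.toPerm _ hinv) F]
        rw [← Finset.sum_neg_distrib]
        exact Finset.sum_congr rfl fun z _ => hneg z
      have h2 : (2 : ℂ) * ∑ z : Fin n → Bool, F z = 0 := by linear_combination hS
      exact (mul_eq_zero.1 h2).resolve_left two_ne_zero
    have huniv : ∀ z : Fin n → Bool, (∏ i, if z i then (1 : ℂ) else -1) *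
        (∑ U ∈ (univ : Finset (Fin n)).powerset,
          (-1 : ℂ) ^ ((univ : Finset (Fin n)).card - U.card) *
            μ (∑ i ∈ U, if z i then a i else -a i)) = Kfun μ a := by
      intro z
      have hKb : (∑ U ∈ (univ : Finset (Fin n)).powerset,
            (-1 : ℂ) ^ ((univ : Finset (Fin n)).card - U.card) *
              μ (∑ i ∈ U, if z i then a i else -a i))
          = Kfun μ (fun i => if z i then a i else -a i) := by
        rw [Kfun]
        apply Finset.sum_congr rfl
        intro U hU
        rw [Finset.card_univ, Fintype.card_fin]
      have hb : (fun i => if z i then a i else -a i)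
          = (fun i => if i ∈ (univ : Finset (Fin n)).filter (fun i => z i = false)
              then -a i else a i) := by
        funext i
        cases hzi : z i <;> simp [hzi]
      have hs : (∏ i, if z i then (1 : ℂ) else -1)
          = (-1 : ℂ) ^ ((univ : Finset (Fin n)).filter (fun i => z i = false)).card := by
        have hpt : ∀ i : Fin n, (if z i then (1 : ℂ) else -1)
            = (if z i = false then (-1 : ℂ) else 1) := by
          intro i; cases z i <;> simp
        rw [Finset.prod_congr rfl (fun i _ => hpt i), Finset.prod_ite,
          Finset.prod_const, Finset.prod_const]
        simp
      rw [hKb, hb, Kflip hμ h0, hs, ← mul_assoc, ← pow_add,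
        Even.neg_one_pow ⟨((univ : Finset (Fin n)).filter (fun i => z i = false)).card, rfl⟩,
        one_mul]
    calc ∑ z : Fin n → Bool,
          (∏ i, if z i then (1 : ℂ) else -1) * μ (∑ i, if z i then a i else -a i)
        = ∑ z : Fin n → Bool, ∑ T ∈ (univ : Finset (Fin n)).powerset,
            (∏ i, if z i then (1 : ℂ) else -1) * (∑ U ∈ T.powerset,
              (-1 : ℂ) ^ (T.card - U.card) *
                μ (∑ i ∈ U, if z i then a i else -a i)) := by
          apply Finset.sum_congr rfl
          intro z _
          rw [hmob z, Finset.mul_sum]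
      _ = ∑ T ∈ (univ : Finset (Fin n)).powerset, ∑ z : Fin n → Bool,
            (∏ i, if z i then (1 : ℂ) else -1) * (∑ U ∈ T.powerset,
              (-1 : ℂ) ^ (T.card - U.card) *
                μ (∑ i ∈ U, if z i then a i else -a i)) := Finset.sum_comm
      _ = ∑ z : Fin n → Bool, (∏ i, if z i then (1 : ℂ) else -1) *
            (∑ U ∈ (univ : Finset (Fin n)).powerset,
              (-1 : ℂ) ^ ((univ : Finset (Fin n)).card - U.card) *
                μ (∑ i ∈ U, if z i then a i else -a i)) :=
          Finset.sum_eq_single_of_mem univ (Finset.mem_powerset_self _)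
            (fun T hT hTne => hzero T hT hTne)
      _ = ∑ _z : Fin n → Bool, Kfun μ a := Finset.sum_congr rfl fun z _ => huniv z
      _ = (2 : ℂ) ^ n * Kfun μ a := by
          rw [Finset.sum_const, Finset.card_univ]
          simp only [Fintype.card_fun, Fintype.card_fin, Fintype.card_bool, nsmul_eq_mul]
          push_cast
          ring
  rw [interference_eq_Kfun μ h0 a, polarization, key]
  have h2n : (2 : ℂ) ^ n ≠ 0 := pow_ne_zero n two_ne_zero
  have hfac : (n.factorial : ℂ) ≠ 0 := Nat.cast_ne_zero.2 n.factorial_ne_zero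
  field_simp
end

section
/- Let A be a ℚ-vector space, n ≥ 2, and let Π_n : 𝓜_n(A) → Σ_n(A) be the polarization map Π_n(μ)(a₁, …, a_n) = (1/(2ⁿ n!)) Σ_{z∈{1,−1}ⁿ} z₁⋯z_n · μ(z₁a₁ + ⋯ + z_n a_n). Then the kernel of Π_n is exactly 𝓜_{n−1}(A): for μ ∈ 𝓜_n(A), Π_n(μ) = 0 if and only if μ ∈ 𝓜_{n−1}(A). -/
open Finset

/-! ### Auxiliary machinery: iterated finite differences -/

/-- The iterated difference functional
`D(b, x) = Σ_{S ⊆ {1,…,k}} (−1)^{k−|S|} μ(x + Σ_{i∈S} b_i)`. -/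
noncomputable def Dfun {A : Type*} [AddCommGroup A] (μ : A → ℂ) {k : ℕ}
    (b : Fin k → A) (x : A) : ℂ :=
  ∑ S ∈ (Finset.univ : Finset (Fin k)).powerset,
    (-1 : ℂ) ^ (k - S.card) * μ (x + ∑ i ∈ S, b i)

lemma neg_one_pow_sub_succ' (k c : ℕ) (hc : c ≤ k) :
    ((-1 : ℂ)) ^ (k + 1 - c) = -((-1 : ℂ) ^ (k - c)) := by
  have h : k + 1 - c = (k - c) + 1 := by omega
  rw [h, pow_succ]; ring

lemma sum_powerset_insert_split {α : Type*} [DecidableEq α] {s : Finset α} {a : α} (h : a ∉ s)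
    (f : Finset α → ℂ) :
    ∑ t ∈ (insert a s).powerset, f t
      = ∑ t ∈ s.powerset, f t + ∑ t ∈ s.powerset, f (insert a t) := by
  rw [Finset.powerset_insert, Finset.sum_union, Finset.sum_image]
  · intro t ht u hu hins
    have ht' : a ∉ t := fun hat => h (Finset.mem_powerset.mp ht hat)
    have hu' : a ∉ u := fun hau => h (Finset.mem_powerset.mp hu hau)
    rw [← Finset.erase_insert ht', ← Finset.erase_insert hu', hins]
  · rw [Finset.disjoint_right]
    intro t ht ht'
    obtain ⟨u, hu, rfl⟩ := Finset.mem_image.mp ht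
    have : a ∈ s := Finset.mem_powerset.mp ht' (Finset.mem_insert_self a u)
    exact h this

lemma powerset_map' {α β : Type*} (f : α ↪ β) (s : Finset α) :
    (s.map f).powerset = s.powerset.map (Finset.mapEmbedding f).toEmbedding := by
  ext t
  simp only [Finset.mem_powerset, Finset.mem_map, RelEmbedding.coe_toEmbedding,
    Finset.mapEmbedding_apply, Finset.subset_map_iff]
  constructor <;> (rintro ⟨u, hu, rfl⟩; exact ⟨u, hu, rfl⟩)

lemma Dfun_snoc {A : Type*} [AddCommGroup A] (μ : A → ℂ) (k : ℕ)
    (b : Fin k → A) (c : A) (x : A) :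
    Dfun μ (Fin.snoc b c) x = Dfun μ b (x + c) - Dfun μ b x := by
  unfold Dfun
  have hlast : Fin.last k ∉ (Finset.univ : Finset (Fin k)).map Fin.castSuccEmb := by
    simp only [Finset.mem_map, Finset.mem_univ, true_and, not_exists]
    intro j hj
    exact absurd (congrArg Fin.val hj) (by simp [Fin.castSuccEmb]; omega)
  rw [Fin.univ_castSuccEmb, Finset.cons_eq_insert, sum_powerset_insert_split hlast]
  rw [powerset_map' Fin.castSuccEmb, Finset.sum_map, Finset.sum_map]
  have key1 : ∀ T ∈ (Finset.univ : Finset (Fin k)).powerset,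
      (-1 : ℂ) ^ (k + 1 - ((Finset.mapEmbedding Fin.castSuccEmb).toEmbedding T).card) *
        μ (x + ∑ i ∈ (Finset.mapEmbedding Fin.castSuccEmb).toEmbedding T, Fin.snoc b c i)
      = -((-1 : ℂ) ^ (k - T.card) * μ (x + ∑ i ∈ T, b i)) := by
    intro T hT
    rw [RelEmbedding.coe_toEmbedding, Finset.mapEmbedding_apply, Finset.card_map, Finset.sum_map]
    have hc : T.card ≤ k := by
      simpa using Finset.card_le_card (Finset.mem_powerset.mp hT)
    rw [neg_one_pow_sub_succ' k T.card hc]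
    have : ∀ i ∈ T, (Fin.snoc b c : Fin (k+1) → A) (Fin.castSuccEmb i) = b i := by
      intro i _
      exact Fin.snoc_castSucc (α := fun _ => A) c b i
    rw [Finset.sum_congr rfl this]
    ring
  have key2 : ∀ T ∈ (Finset.univ : Finset (Fin k)).powerset,
      (-1 : ℂ) ^ (k + 1 -
          (insert (Fin.last k) ((Finset.mapEmbedding Fin.castSuccEmb).toEmbedding T)).card) *
        μ (x + ∑ i ∈ insert (Fin.last k) ((Finset.mapEmbedding Fin.castSuccEmb).toEmbedding T),
            Fin.snoc b c i)
      = (-1 : ℂ) ^ (k - T.card) * μ ((x + c) + ∑ i ∈ T, b i) := by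
    intro T hT
    have hnotmem : Fin.last k ∉ (Finset.mapEmbedding Fin.castSuccEmb).toEmbedding T := by
      intro hmem
      rw [RelEmbedding.coe_toEmbedding, Finset.mapEmbedding_apply] at hmem
      obtain ⟨j, _, hj⟩ := Finset.mem_map.mp hmem
      exact absurd (congrArg Fin.val hj) (by simp [Fin.castSuccEmb]; omega)
    rw [Finset.sum_insert hnotmem, Finset.card_insert_of_notMem hnotmem,
      RelEmbedding.coe_toEmbedding, Finset.mapEmbedding_apply, Finset.card_map, Finset.sum_map]
    have : ∀ i ∈ T, (Fin.snoc b c : Fin (k+1) → A) (Fin.castSuccEmb i) = b i := by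
      intro i _
      exact Fin.snoc_castSucc (α := fun _ => A) c b i
    rw [Finset.sum_congr rfl this]
    have hexp : k + 1 - (T.card + 1) = k - T.card := by omega
    rw [hexp]
    rw [Fin.snoc_last]
    congr 2
    abel
  rw [Finset.sum_congr rfl key1, Finset.sum_congr rfl key2, Finset.sum_neg_distrib]
  ring

lemma Dfun_zero_eq {A : Type*} [AddCommGroup A] (μ : A → ℂ) (k : ℕ)
    (a : Fin (k+1) → A) :
    Dfun μ a 0
    = μ (∑ i, a i) + (-1:ℂ)^(k+1) * μ 0 -
      ∑ S ∈ (Finset.univ : Finset (Fin (k+1))).powerset.filter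
          (fun S => S.Nonempty ∧ S.card ≤ k),
        (-1 : ℂ) ^ (k - S.card) * μ (∑ i ∈ S, a i) := by
  unfold Dfun
  rw [← Finset.sum_filter_add_sum_filter_not ((Finset.univ : Finset (Fin (k+1))).powerset)
    (fun S => S.Nonempty ∧ S.card ≤ k)]
  have h1 : ∀ S ∈ (Finset.univ : Finset (Fin (k+1))).powerset.filter
      (fun S => S.Nonempty ∧ S.card ≤ k),
      (-1 : ℂ) ^ (k + 1 - S.card) * μ ((0:A) + ∑ i ∈ S, a i)
      = -((-1 : ℂ) ^ (k - S.card) * μ (∑ i ∈ S, a i)) := by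
    intro S hS
    have hle : S.card ≤ k := (Finset.mem_filter.mp hS).2.2
    rw [neg_one_pow_sub_succ' k S.card hle, zero_add]
    ring
  rw [Finset.sum_congr rfl h1, Finset.sum_neg_distrib]
  have h2 : (Finset.univ : Finset (Fin (k+1))).powerset.filter
      (fun S => ¬(S.Nonempty ∧ S.card ≤ k)) = {∅, Finset.univ} := by
    ext S
    simp only [Finset.mem_filter, Finset.mem_powerset, Finset.mem_insert, Finset.mem_singleton]
    constructor
    · rintro ⟨hsub, h⟩
      by_cases hne : S.Nonempty
      · right
        have : ¬ S.card ≤ k := fun hle => h ⟨hne, hle⟩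
        have hcard : S.card = k + 1 := by
          have := Finset.card_le_card hsub
          simp only [Finset.card_univ, Fintype.card_fin] at this
          omega
        exact Finset.eq_univ_of_card S (by simpa using hcard)
      · left; exact Finset.not_nonempty_iff_eq_empty.mp hne
    · rintro (rfl | rfl)
      · simp
      · simp
  rw [h2]
  have hne : (∅ : Finset (Fin (k+1))) ≠ Finset.univ := by
    simp [Finset.eq_univ_iff_forall]
  rw [Finset.sum_pair hne]
  simp only [Finset.card_empty, Finset.sum_empty, add_zero, Finset.card_univ, Fintype.card_fin,
    Nat.sub_zero, Nat.sub_self, pow_zero, one_mul, zero_add]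
  ring

/-- Identify sign tuples with subsets. -/
def boolEquiv (n : ℕ) : (Fin n → Bool) ≃ Finset (Fin n) where
  toFun z := Finset.univ.filter (fun i => z i = true)
  invFun S := fun i => decide (i ∈ S)
  left_inv z := by funext i; simp
  right_inv S := by ext i; simp

lemma polarization_eq_Dfun {A : Type*} [AddCommGroup A] (μ : A → ℂ) (n : ℕ)
    (a : Fin n → A) :
    polarization μ a =
      (1 / (2 ^ n * n.factorial : ℂ)) * Dfun μ (fun i => a i + a i) (-∑ i, a i) := by
  unfold polarization Dfun
  congr 1
  rw [Finset.powerset_univ]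
  rw [← Equiv.sum_comp (boolEquiv n)]
  apply Finset.sum_congr rfl
  intro z _
  have hcard : (boolEquiv n z).card = (Finset.univ.filter (fun i => z i = true)).card := rfl
  have hprod : (∏ i, if z i then (1 : ℂ) else -1) = (-1 : ℂ) ^ (n - (boolEquiv n z).card) := by
    rw [Finset.prod_ite, Finset.prod_const_one, Finset.prod_const, one_mul]
    congr 1
    have := Finset.card_filter_add_card_filter_not
      (s := (Finset.univ : Finset (Fin n))) (p := fun i => z i = true)
    simp only [Finset.card_univ, Fintype.card_fin] at this
    rw [hcard]
    omega
  have hsum : (∑ i, if z i then a i else -a i)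
      = -∑ i, a i + ∑ i ∈ boolEquiv n z, (a i + a i) := by
    have h1 : ∀ i : Fin n, (if z i then a i else -a i)
        = -a i + (if z i = true then a i + a i else 0) := by
      intro i
      by_cases h : z i <;> simp [h]
    rw [Finset.sum_congr rfl (fun i _ => h1 i), Finset.sum_add_distrib]
    congr 1
    · rw [Finset.sum_neg_distrib]
    · exact (Finset.sum_filter (fun i => z i = true) (fun i => a i + a i)).symm
  rw [hprod, hsum]

/-- For `n ≥ 2` and `μ ∈ 𝓜_n(A)`, the polarization `Π_n(μ)` vanishes identically
iff `μ ∈ 𝓜_{n−1}(A)`: the kernel of `Π_n` is exactly `𝓜_{n−1}(A)`. -/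
theorem polarization_eq_zero_iff_memMeasureSpace_pred {A : Type*} [AddCommGroup A] [Module ℚ A]
    (μ : A → ℂ) (n : ℕ) (hn : 2 ≤ n) (hμ : MemMeasureSpace n μ) :
    (∀ a : Fin n → A, polarization μ a = 0) ↔ MemMeasureSpace (n - 1) μ := by
  obtain ⟨m, rfl⟩ : ∃ m, n = m + 2 := ⟨n - 2, by omega⟩
  have hD : ∀ a : Fin (m + 2 + 1) → A, Dfun μ a 0 = (-1:ℂ)^(m+3) * μ 0 := by
    intro a
    rw [Dfun_zero_eq μ (m+2) a, hμ a]
    ring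
  have hzero : Dfun μ (Fin.snoc (fun _ : Fin (m+2) => (0:A)) (0:A)) (0:A) = 0 := by
    rw [Dfun_snoc, add_zero]
    exact sub_self _
  have h0 : μ 0 = 0 := by
    have h2 := hD (Fin.snoc (fun _ : Fin (m+2) => (0:A)) (0:A))
    rw [hzero] at h2
    have hne : ((-1:ℂ)^(m+3)) ≠ 0 := pow_ne_zero _ (by norm_num)
    exact (mul_eq_zero.mp h2.symm).resolve_left hne
  have hDall : ∀ a : Fin (m+2+1) → A, Dfun μ a 0 = 0 := fun a => by
    rw [hD a, h0, mul_zero]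
  have hconst : ∀ (b : Fin (m+2) → A) (x : A), Dfun μ b x = Dfun μ b 0 := by
    intro b x
    have h := hDall (Fin.snoc b x)
    rw [Dfun_snoc, zero_add] at h
    exact sub_eq_zero.mp h
  have key : (∀ a : Fin (m+2) → A, polarization μ a = 0)
      ↔ (∀ b : Fin (m+2) → A, Dfun μ b 0 = 0) := by
    have hcne : (1 / (2 ^ (m+2) * (m+2).factorial : ℂ)) ≠ 0 := by
      apply one_div_ne_zero
      apply mul_ne_zero
      · exact pow_ne_zero _ two_ne_zero
      · exact Nat.cast_ne_zero.mpr (Nat.factorial_ne_zero _)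
    constructor
    · intro h b
      have hb : (fun i => ((2:ℚ)⁻¹ • b i) + ((2:ℚ)⁻¹ • b i)) = b := by
        funext i
        rw [← add_smul]
        norm_num
      have hp := h (fun i => (2:ℚ)⁻¹ • b i)
      rw [polarization_eq_Dfun, hb, hconst] at hp
      exact (mul_eq_zero.mp hp).resolve_left hcne
    · intro h a
      rw [polarization_eq_Dfun, hconst, h, mul_zero]
  rw [key]
  show (∀ b : Fin (m+2) → A, Dfun μ b 0 = 0) ↔ MemMeasureSpace (m+1) μ
  constructor
  · intro h a
    have hd := Dfun_zero_eq μ (m+1) a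
    rw [h a, h0, mul_zero, add_zero] at hd
    exact sub_eq_zero.mp hd.symm
  · intro h b
    rw [Dfun_zero_eq μ (m+1) b, h b, h0]
    ring
end

section
/- Let A be a ℚ-vector space and n ≥ 2. Every μ ∈ 𝓜_n(A) decomposes uniquely as μ = ν + ι_n(Φ), where ν ∈ 𝓜_{n−1}(A) and Φ ∈ Σ_n(A); explicitly Φ = Π_n(μ) and ν = μ − ι_n(Π_n(μ)). Consequently 𝓜_n(A) ≅ 𝓜_{n−1}(A) ⊕ Σ_n(A) as complex vector spaces, and the short exact sequence 0 → 𝓜_{n−1}(A) → 𝓜_n(A) → Σ_n(A) → 0 splits via ι_n. -/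
/-! Everything is governed by the mixed difference
`Δ_{a₁}⋯Δ_{a_k} μ (0) = Σ_S (−1)^{k−|S|} μ(Σ_{i∈S} aᵢ)`: `μ ∈ 𝓜_k` iff `μ 0 = 0` and all
`(k+1)`-fold mixed differences vanish. For `μ ∈ 𝓜_n` the `n`-fold difference `Δⁿμ` is symmetric,
invariant under translating `μ` (because `Δⁿ⁺¹μ = 0`), hence additive in each argument; the sign
sum defining `Π_n(μ)` is `Δⁿμ` at the doubled arguments after a translation, so
`Π_n(μ) = Δⁿμ / n!`. For `Φ ∈ Σ_n`, expanding `Φ(x, …, x)` multilinearly and using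
inclusion–exclusion over the image of each index map gives `Δⁿ(ι_n Φ) = n! Φ`. So
`μ − ι_n Φ ∈ 𝓜_{n−1}` iff `Δⁿμ = n! Φ` iff `Φ = Π_n(μ)`, which is existence and uniqueness. -/

open Finset

theorem Fin.sum_finset_univ_succ {M : Type*} [AddCommMonoid M] {k : ℕ}
    (f : Finset (Fin (k + 1)) → M) :
    ∑ S, f S = ∑ T : Finset (Fin k),
      (f (T.image Fin.castSucc) + f (insert (Fin.last k) (T.image Fin.castSucc))) := by
  have hinj : Set.InjOn (fun T : Finset (Fin k) => T.image Fin.castSucc)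
      (univ.powerset : Finset (Finset (Fin k))) :=
    image_injOn_powerset_of_injOn (Fin.castSucc_injective k).injOn
  rw [← powerset_univ, Fin.univ_castSuccEmb, cons_eq_insert, sum_powerset_insert (by simp),
    map_eq_image, Fin.coe_castSuccEmb, powerset_image, sum_image hinj, sum_image hinj,
    powerset_univ, ← sum_add_distrib]

theorem Fintype.sum_bool_fun_eq_sum_finset {ι M : Type*} [Fintype ι] [DecidableEq ι]
    [AddCommMonoid M] (f : (ι → Bool) → M) :
    ∑ z, f z = ∑ S : Finset ι, f (fun i => decide (i ∈ S)) := by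
  refine (Fintype.sum_bijective (fun S i => decide (i ∈ S)) ⟨fun S T hST => ?_, fun z => ?_⟩
    _ _ fun _ => rfl).symm
  · ext i
    simpa using congrFun hST i
  · exact ⟨univ.filter (fun i => z i), by ext i; simp⟩

theorem sum_superset_neg_one_pow_card_compl {ι : Type*} [Fintype ι] [DecidableEq ι]
    (R : Finset ι) :
    ∑ S with R ⊆ S, (-1 : ℂ) ^ (Fintype.card ι - #S) = if R = univ then 1 else 0 := by
  calc ∑ S with R ⊆ S, (-1 : ℂ) ^ (Fintype.card ι - #S)
      = ∑ T ∈ Rᶜ.powerset, (-1 : ℂ) ^ #T :=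
        sum_nbij' compl compl (by simp) (by simp [subset_compl_comm]) (by simp) (by simp)
          (by simp [card_compl])
    _ = if R = univ then 1 else 0 := by
        exact_mod_cast (sum_powerset_neg_one_pow_card (x := Rᶜ)).trans (by simp)

theorem sum_filter_image_univ_eq_univ {ι M : Type*} [Fintype ι] [DecidableEq ι]
    [AddCommMonoid M] (f : (ι → ι) → M) :
    ∑ r with image r univ = univ, f r = ∑ σ : Equiv.Perm ι, f σ := by
  refine (sum_bij (fun (σ : Equiv.Perm ι) _ => ⇑σ)
    (fun σ _ => by simp [image_univ_of_surjective σ.surjective])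
    (fun σ _ τ _ h => DFunLike.coe_injective h) (fun r hr => ?_) fun _ _ => rfl).symm
  have hsurj : Function.Surjective r := fun x => by
    have hx : x ∈ image r univ := by rw [(mem_filter.1 hr).2]; exact mem_univ x
    simpa using hx
  exact ⟨.ofBijective r (Finite.surjective_iff_bijective.1 hsurj), mem_univ _, rfl⟩

section
variable {A : Type*} [AddCommGroup A]

noncomputable def multiDiff (μ : A → ℂ) {k : ℕ} (a : Fin k → A) : ℂ :=
  ∑ S : Finset (Fin k), (-1 : ℂ) ^ (k - #S) * μ (∑ i ∈ S, a i)

theorem multiDiff_sub (μ ν : A → ℂ) {k : ℕ} (a : Fin k → A) :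
    multiDiff (fun x => μ x - ν x) a = multiDiff μ a - multiDiff ν a := by
  simp only [multiDiff, ← sum_sub_distrib, mul_sub]

theorem multiDiff_snoc (μ : A → ℂ) {k : ℕ} (a : Fin k → A) (c : A) :
    multiDiff μ (Fin.snoc a c) = multiDiff (fun x => μ (x + c)) a - multiDiff μ a := by
  have hsum (T : Finset (Fin k)) :
      ∑ i ∈ T.image Fin.castSucc, (Fin.snoc a c : Fin (k + 1) → A) i = ∑ i ∈ T, a i := by
    simp [sum_image (Fin.castSucc_injective k).injOn]
  have hcard (T : Finset (Fin k)) : #(T.image Fin.castSucc) = #T :=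
    card_image_of_injective _ (Fin.castSucc_injective k)
  have hlast (T : Finset (Fin k)) : Fin.last k ∉ T.image Fin.castSucc := by simp
  rw [multiDiff, Fin.sum_finset_univ_succ, multiDiff, multiDiff, ← sum_sub_distrib]
  refine sum_congr rfl fun T _ => ?_
  have hT : #T ≤ k := card_finset_fin_le T
  rw [sum_insert (hlast T), card_insert_of_notMem (hlast T), hsum, hcard, Fin.snoc_last,
    add_comm c, Nat.add_sub_add_right, Nat.sub_add_comm hT, pow_succ]
  ring

theorem multiDiff_const_zero (μ : A → ℂ) {k : ℕ} :
    multiDiff μ (fun _ : Fin (k + 1) => (0 : A)) = 0 := by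
  rw [← Fin.snoc_init_self (fun _ : Fin (k + 1) => (0 : A)), multiDiff_snoc]
  simp

theorem multiDiff_split (μ : A → ℂ) {k : ℕ} (a : Fin (k + 1) → A) :
    multiDiff μ a = (-1) ^ (k + 1) * μ 0 + μ (∑ i, a i) -
      ∑ S ∈ (univ : Finset (Fin (k + 1))).powerset.filter (fun S => S.Nonempty ∧ #S ≤ k),
        (-1 : ℂ) ^ (k - #S) * μ (∑ i ∈ S, a i) := by
  have hrest : (univ : Finset (Fin (k + 1))).powerset.filter
      (fun S => ¬(S.Nonempty ∧ #S ≤ k)) = {∅, univ} := by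
    ext S
    simp only [mem_filter, mem_powerset, subset_univ, true_and, mem_insert, mem_singleton,
      not_and_or, not_nonempty_iff_eq_empty, not_le, ← card_eq_iff_eq_univ, Fintype.card_fin]
    exact or_congr_right (by have := card_finset_fin_le S; omega)
  rw [multiDiff, ← powerset_univ,
    ← sum_filter_not_add_sum_filter _ (fun S => S.Nonempty ∧ #S ≤ k), hrest,
    sum_pair univ_nonempty.ne_empty.symm, sub_eq_add_neg, ← sum_neg_distrib]
  congr 1
  · simp
  · refine sum_congr rfl fun S hS => ?_
    rw [Nat.sub_add_comm (mem_filter.1 hS).2.2, pow_succ]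
    ring

theorem memMeasureSpace_iff {k : ℕ} {μ : A → ℂ} :
    MemMeasureSpace k μ ↔ μ 0 = 0 ∧ ∀ a : Fin (k + 1) → A, multiDiff μ a = 0 := by
  refine ⟨fun hμ => ?_, fun ⟨h0, h⟩ a => ?_⟩
  · have h0 : μ 0 = 0 := by
      have := multiDiff_split μ (fun _ : Fin (k + 1) => 0)
      rw [multiDiff_const_zero, ← hμ] at this
      simpa using this
    refine ⟨h0, fun a => ?_⟩
    rw [multiDiff_split, ← hμ a, h0]
    ring
  · have hsplit := multiDiff_split μ a
    rw [h a, h0] at hsplit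
    linear_combination -hsplit

theorem isTotallySymmetric_multiDiff (μ : A → ℂ) {k : ℕ} :
    IsTotallySymmetric (multiDiff μ : (Fin k → A) → ℂ) := fun σ a =>
  Fintype.sum_equiv (Equiv.finsetCongr σ) _ _ fun S => by
    simp [Equiv.finsetCongr_apply, sum_map]

theorem multiDiff_add_const {μ : A → ℂ} {k : ℕ} (h : ∀ b : Fin (k + 1) → A, multiDiff μ b = 0)
    (c : A) (a : Fin k → A) : multiDiff (fun x => μ (x + c)) a = multiDiff μ a :=
  sub_eq_zero.1 ((multiDiff_snoc μ a c).symm.trans (h _))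

theorem multiDiff_snoc_add {μ : A → ℂ} {k : ℕ} (h : ∀ b : Fin (k + 2) → A, multiDiff μ b = 0)
    (a : Fin k → A) (x y : A) :
    multiDiff μ (Fin.snoc a (x + y)) =
      multiDiff μ (Fin.snoc a x) + multiDiff μ (Fin.snoc a y) := by
  have h2 := h (Fin.snoc (Fin.snoc a x) y)
  simp only [multiDiff_snoc, add_assoc] at h2 ⊢
  linear_combination h2

theorem IsMultiadditive.of_snoc {k : ℕ} {Φ : (Fin (k + 1) → A) → ℂ} (hs : IsTotallySymmetric Φ)
    (h : ∀ a x y, Φ (Fin.snoc a (x + y)) = Φ (Fin.snoc a x) + Φ (Fin.snoc a y)) :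
    IsMultiadditive Φ := by
  intro i a x y
  have hupdate (z : A) :
      Φ (Function.update a i z) = Φ (Fin.snoc (Fin.init (a ∘ Equiv.swap i (Fin.last k))) z) := by
    rw [← hs (Equiv.swap i (Fin.last k)), Function.update_comp_equiv, Equiv.symm_swap,
      Equiv.swap_apply_left, ← Fin.update_snoc_last, Fin.snoc_init_self]
  rw [hupdate, hupdate, hupdate, h]

theorem isMultiadditive_multiDiff {μ : A → ℂ} {k : ℕ}
    (h : ∀ b : Fin (k + 1) → A, multiDiff μ b = 0) :
    IsMultiadditive (multiDiff μ : (Fin k → A) → ℂ) := by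
  cases k with
  | zero => exact fun i => i.elim0
  | succ k => exact .of_snoc (isTotallySymmetric_multiDiff μ) (multiDiff_snoc_add h)

def IsMultiadditive.toMultilinearMap {k : ℕ} {Φ : (Fin k → A) → ℂ} (h : IsMultiadditive Φ) :
    MultilinearMap ℤ (fun _ : Fin k => A) ℂ where
  toFun := Φ
  map_update_add' := by
    intro inst m i x y
    obtain rfl := Subsingleton.elim inst (instDecidableEqFin k)
    exact h i m x y
  map_update_smul' := by
    intro inst m i c x
    obtain rfl := Subsingleton.elim inst (instDecidableEqFin k)
    exact map_zsmul (AddMonoidHom.mk' (fun t => Φ (Function.update m i t)) (h i m)) c x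

@[simp] theorem IsMultiadditive.toMultilinearMap_apply {k : ℕ} {Φ : (Fin k → A) → ℂ}
    (h : IsMultiadditive Φ) (a : Fin k → A) : h.toMultilinearMap a = Φ a := rfl

theorem polarization_eq_multiDiff {μ : A → ℂ} {k : ℕ}
    (h : ∀ b : Fin (k + 1) → A, multiDiff μ b = 0) (a : Fin k → A) :
    polarization μ a = multiDiff μ a / k.factorial := by
  have hsigns : ∑ z : Fin k → Bool,
      (∏ i, if z i then (1 : ℂ) else -1) * μ (∑ i, if z i then a i else -a i) =
        multiDiff (fun x => μ (x + -∑ i, a i)) (fun i => (2 : ℤ) • a i) := by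
    rw [Fintype.sum_bool_fun_eq_sum_finset, multiDiff]
    refine sum_congr rfl fun S _ => ?_
    congr 1
    · simp [prod_ite, filter_not, card_sdiff]
    · congr 1
      rw [← Fintype.sum_ite_mem S, ← sum_neg_distrib, ← sum_add_distrib]
      refine sum_congr rfl fun i _ => ?_
      simp only [decide_eq_true_eq]
      split_ifs
      · rw [two_zsmul]; abel
      · rw [zero_add]
  have hdouble : multiDiff μ (fun i => (2 : ℤ) • a i) = 2 ^ k * multiDiff μ a := by
    simpa using (isMultiadditive_multiDiff h).toMultilinearMap.map_smul_univ (fun _ => 2) a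
  rw [polarization, hsigns, multiDiff_add_const h, hdouble]
  field_simp

theorem multiDiff_diagonal {n : ℕ} {Φ : (Fin n → A) → ℂ} (hs : IsTotallySymmetric Φ)
    (hm : IsMultiadditive Φ) (a : Fin n → A) :
    multiDiff (fun x => Φ (fun _ => x)) a = n.factorial * Φ a := by
  have hexpand (S : Finset (Fin n)) :
      Φ (fun _ => ∑ i ∈ S, a i) =
        ∑ r : Fin n → Fin n, if image r univ ⊆ S then Φ (a ∘ r) else 0 := by
    have := hm.toMultilinearMap.map_sum_finset (fun _ i => a i) (fun _ => S)
    rw [← Fintype.sum_ite_mem (Fintype.piFinset fun _ => S)] at this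
    simpa [Fintype.mem_piFinset, image_subset_iff, Function.comp_def] using this
  calc multiDiff (fun x => Φ (fun _ => x)) a
      = ∑ r : Fin n → Fin n, (∑ S with image r univ ⊆ S, (-1 : ℂ) ^ (n - #S)) * Φ (a ∘ r) := by
        simp only [multiDiff, hexpand, mul_sum, sum_mul, sum_filter]
        rw [sum_comm]
        simp [ite_mul]
    _ = ∑ r with image r univ = univ, Φ (a ∘ r) := by
        rw [sum_filter]
        refine sum_congr rfl fun r _ => ?_
        have := sum_superset_neg_one_pow_card_compl (image r univ)
        rw [Fintype.card_fin] at this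
        rw [this, ite_mul, one_mul, zero_mul]
    _ = n.factorial * Φ a := by
        rw [sum_filter_image_univ_eq_univ, sum_congr rfl fun σ _ => hs σ a]
        simp [Fintype.card_perm]

theorem MemMeasureSpace.isTotallySymmetric_polarization {k : ℕ} {μ : A → ℂ}
    (hμ : MemMeasureSpace (k + 1) μ) :
    IsTotallySymmetric (polarization μ : (Fin (k + 1) → A) → ℂ) := fun σ a => by
  have hΔ := (memMeasureSpace_iff.1 hμ).2
  rw [polarization_eq_multiDiff hΔ, polarization_eq_multiDiff hΔ, isTotallySymmetric_multiDiff]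

theorem MemMeasureSpace.isMultiadditive_polarization {k : ℕ} {μ : A → ℂ}
    (hμ : MemMeasureSpace (k + 1) μ) :
    IsMultiadditive (polarization μ : (Fin (k + 1) → A) → ℂ) := fun i a x y => by
  have hΔ := (memMeasureSpace_iff.1 hμ).2
  simp only [polarization_eq_multiDiff hΔ, isMultiadditive_multiDiff hΔ i a x y, add_div]

theorem MemMeasureSpace.memMeasureSpace_sub_iff {k : ℕ} {μ : A → ℂ}
    (hμ : MemMeasureSpace (k + 1) μ) {Φ : (Fin (k + 1) → A) → ℂ} (hs : IsTotallySymmetric Φ)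
    (hm : IsMultiadditive Φ) :
    MemMeasureSpace k (fun x => μ x - Φ (fun _ => x)) ↔ Φ = polarization μ := by
  obtain ⟨hμ0, hΔ⟩ := memMeasureSpace_iff.1 hμ
  have hΦ0 : Φ (fun _ => 0) = 0 := hm.toMultilinearMap.map_zero
  have hfact : ((k + 1).factorial : ℂ) ≠ 0 := Nat.cast_ne_zero.2 (Nat.factorial_ne_zero _)
  simp only [memMeasureSpace_iff, hμ0, hΦ0, sub_zero, true_and, multiDiff_sub,
    multiDiff_diagonal hs hm, funext_iff, polarization_eq_multiDiff hΔ, sub_eq_zero,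
    eq_div_iff hfact]
  exact forall_congr' fun a => by rw [eq_comm, mul_comm]

end

theorem measureSpace_decomposition_general {A : Type*} [AddCommGroup A]
    (n : ℕ) (hn : 2 ≤ n) (μ : A → ℂ) (hμ : MemMeasureSpace n μ) :
    (MemMeasureSpace (n - 1) (fun x : A => μ x - polarization μ (fun _ : Fin n => x)) ∧
      IsTotallySymmetric (fun a : Fin n → A => polarization μ a) ∧
      IsMultiadditive (fun a : Fin n → A => polarization μ a)) ∧
    (∃! p : (A → ℂ) × ((Fin n → A) → ℂ),
      MemMeasureSpace (n - 1) p.1 ∧ IsTotallySymmetric p.2 ∧ IsMultiadditive p.2 ∧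
      ∀ x : A, μ x = p.1 x + p.2 (fun _ => x)) := by
  obtain ⟨k, rfl⟩ : ∃ k, n = k + 1 := ⟨n - 1, by omega⟩
  rw [Nat.add_sub_cancel]
  have hs := hμ.isTotallySymmetric_polarization
  have hm := hμ.isMultiadditive_polarization
  have hν := (hμ.memMeasureSpace_sub_iff hs hm).2 rfl
  refine ⟨⟨hν, hs, hm⟩, ⟨(_, _), ⟨hν, hs, hm, fun x => (sub_add_cancel _ _).symm⟩, ?_⟩⟩
  rintro ⟨ν, Φ⟩ ⟨hν', hs', hm', hsum⟩
  obtain rfl : ν = fun x => μ x - Φ (fun _ => x) := funext fun x => eq_sub_of_add_eq (hsum x).symm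
  obtain rfl := (hμ.memMeasureSpace_sub_iff hs' hm').1 hν'
  rfl

/-- For `n ≥ 2`, every `μ ∈ 𝓜_n(A)` decomposes uniquely as `μ = ν + ι_n(Φ)` with
`ν ∈ 𝓜_{n−1}(A)` and `Φ ∈ Σ_n(A)`; explicitly `Φ = Π_n(μ)` and
`ν = μ − ι_n(Π_n(μ))`.  This is the splitting of the short exact sequence
`0 → 𝓜_{n−1}(A) → 𝓜_n(A) → Σ_n(A) → 0` via `ι_n`. -/
theorem measureSpace_decomposition {A : Type*} [AddCommGroup A] [Module ℚ A]
    (n : ℕ) (hn : 2 ≤ n) (μ : A → ℂ) (hμ : MemMeasureSpace n μ) :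
    (MemMeasureSpace (n - 1) (fun x : A => μ x - polarization μ (fun _ : Fin n => x)) ∧
      IsTotallySymmetric (fun a : Fin n → A => polarization μ a) ∧
      IsMultiadditive (fun a : Fin n → A => polarization μ a)) ∧
    (∃! p : (A → ℂ) × ((Fin n → A) → ℂ),
      MemMeasureSpace (n - 1) p.1 ∧ IsTotallySymmetric p.2 ∧ IsMultiadditive p.2 ∧
      ∀ x : A, μ x = p.1 x + p.2 (fun _ => x)) :=
  measureSpace_decomposition_general n hn μ hμ
end
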